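/- Greedy (1 − 1/e) guarantee applied to the coreset objective: let K be a positive natural number and let S_0 = ∅, S_t = S_{t−1} ∪ {j_t} for t = 1, …, K, where at each step j_t ∈ M \ S_{t−1} maximizes J(S_{t−1} ∪ {j}) over all j ∉ S_{t−1} (assume K ≤ |M|). Then J(S_K) ≥ (1 − 1/e) · max{ J(S) : S ⊆ M, |S| ≤ K }. -/

import Mathlib

/-- Coreset objective: `J(S) = ∑ i, max_{j ∈ S} r i j` for nonempty `S`, and `J(∅) = 0`. -/
noncomputable def J {N : ℕ} {M : Type*} (r : Fin N → M → ℝ) (S : Finset M) : ℝ :=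
  if h : S.Nonempty then ∑ i, S.sup' h (r i) else 0

/-!
`J` is a sum of functions `S ↦ max_{j ∈ S} r i j`, each monotone and satisfying
`f T ≤ f S + ∑ j ∈ T \ S, (f (insert j S) - f S)` (the maximiser over `T`, if it lies outside
`S`, alone contributes enough). Both properties pass to sums. If `|T| ≤ K`, the greedy step
therefore gains at least `1/K` of the current gap `J T - J S`, so after `K` steps the gap is at
most `(1 - 1/K)^K J T ≤ J T / e`.
-/

open Finset

section MaxOrZero

variable {M : Type*} {g : M → ℝ}

noncomputable def maxOrZero (g : M → ℝ) (S : Finset M) : ℝ :=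
  if h : S.Nonempty then S.sup' h g else 0

lemma le_maxOrZero {S : Finset M} {j : M} (hj : j ∈ S) : g j ≤ maxOrZero g S := by
  rw [maxOrZero, dif_pos ⟨j, hj⟩]
  exact le_sup' g hj

lemma maxOrZero_nonneg (hg : 0 ≤ g) (S : Finset M) : 0 ≤ maxOrZero g S := by
  rcases S.eq_empty_or_nonempty with rfl | ⟨j, hj⟩
  · simp [maxOrZero]
  · exact (hg j).trans (le_maxOrZero hj)

lemma maxOrZero_mono (hg : 0 ≤ g) : Monotone (maxOrZero g) := by
  intro S T hST
  rcases S.eq_empty_or_nonempty with rfl | hS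
  · simpa [maxOrZero] using maxOrZero_nonneg hg T
  · rw [maxOrZero, dif_pos hS]
    exact sup'_le hS g fun j hj => le_maxOrZero (hST hj)

lemma maxOrZero_le_add_sum_marginal [DecidableEq M] (hg : 0 ≤ g) (S T : Finset M) :
    maxOrZero g T ≤
      maxOrZero g S + ∑ j ∈ T \ S, (maxOrZero g (insert j S) - maxOrZero g S) := by
  have hmarginal : ∀ j ∈ T \ S, 0 ≤ maxOrZero g (insert j S) - maxOrZero g S := fun j _ =>
    sub_nonneg.mpr (maxOrZero_mono hg (subset_insert j S))
  rcases T.eq_empty_or_nonempty with rfl | hT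
  · simpa [maxOrZero] using maxOrZero_nonneg hg S
  obtain ⟨j₀, hj₀T, hj₀⟩ := exists_mem_eq_sup' hT g
  have hTj₀ : maxOrZero g T = g j₀ := by rw [maxOrZero, dif_pos hT, hj₀]
  by_cases hj₀S : j₀ ∈ S
  · have := sum_nonneg hmarginal
    linarith [le_maxOrZero (g := g) hj₀S]
  · have := single_le_sum hmarginal (mem_sdiff.mpr ⟨hj₀T, hj₀S⟩)
    linarith [le_maxOrZero (g := g) (mem_insert_self j₀ S)]

end MaxOrZero

section SetFunction

variable {M : Type*} [DecidableEq M]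

lemma sum_le_add_sum_marginal {ι : Type*} (s : Finset ι) (f : ι → Finset M → ℝ)
    {S T : Finset M}
    (hf : ∀ i ∈ s, f i T ≤ f i S + ∑ j ∈ T \ S, (f i (insert j S) - f i S)) :
    ∑ i ∈ s, f i T ≤ ∑ i ∈ s, f i S +
      ∑ j ∈ T \ S, (∑ i ∈ s, f i (insert j S) - ∑ i ∈ s, f i S) := by
  calc ∑ i ∈ s, f i T
      ≤ ∑ i ∈ s, (f i S + ∑ j ∈ T \ S, (f i (insert j S) - f i S)) := sum_le_sum hf
    _ = _ := by simp only [sum_add_distrib, sum_comm (s := s), sum_sub_distrib]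

variable {f : Finset M → ℝ} {T : Finset M} {K : ℕ}

lemma greedy_gap_step (hmono : Monotone f)
    (hsub : ∀ A B, f B ≤ f A + ∑ j ∈ B \ A, (f (insert j A) - f A))
    (hK : 0 < K) (hT : #T ≤ K) {S S' : Finset M} (hSS' : S ⊆ S')
    (hgreedy : ∀ j ∉ S, f (insert j S) ≤ f S') :
    f T - f S' ≤ (1 - 1 / K) * (f T - f S) := by
  have hKpos : (0 : ℝ) < K := by exact_mod_cast hK
  have hgain : 0 ≤ f S' - f S := sub_nonneg.mpr (hmono hSS')
  have hmarginal : ∀ j ∈ T \ S, f (insert j S) - f S ≤ f S' - f S := fun j hj => by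
    linarith [hgreedy j (mem_sdiff.mp hj).2]
  have hcard : (#(T \ S) : ℝ) ≤ K := by
    exact_mod_cast (card_le_card sdiff_subset).trans hT
  have hgap : f T - f S ≤ K * (f S' - f S) := by
    have := sum_le_card_nsmul _ _ _ hmarginal
    rw [nsmul_eq_mul] at this
    nlinarith [hsub S T]
  rw [sub_mul, one_mul, one_div, inv_mul_eq_div]
  linarith [(div_le_iff₀' hKpos).mpr hgap]

lemma greedy_gap_le_pow (hmono : Monotone f)
    (hsub : ∀ A B, f B ≤ f A + ∑ j ∈ B \ A, (f (insert j A) - f A))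
    (hK : 0 < K) (hT : #T ≤ K) {S : ℕ → Finset M} (hSS : ∀ t < K, S t ⊆ S (t + 1))
    (hgreedy : ∀ t < K, ∀ j ∉ S t, f (insert j (S t)) ≤ f (S (t + 1))) :
    ∀ t ≤ K, f T - f (S t) ≤ (1 - 1 / K) ^ t * (f T - f (S 0)) := by
  have hratio : (0 : ℝ) ≤ 1 - 1 / K := by
    rw [sub_nonneg, div_le_one (by exact_mod_cast hK)]
    exact_mod_cast hK
  intro t ht
  induction t with
  | zero => simp
  | succ t ih =>
    calc f T - f (S (t + 1))
        ≤ (1 - 1 / K) * (f T - f (S t)) :=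
          greedy_gap_step hmono hsub hK hT (hSS t ht) (hgreedy t ht)
      _ ≤ (1 - 1 / K) * ((1 - 1 / K) ^ t * (f T - f (S 0))) :=
          mul_le_mul_of_nonneg_left (ih (by omega)) hratio
      _ = (1 - 1 / K) ^ (t + 1) * (f T - f (S 0)) := by ring

end SetFunction

section Coreset

variable {N : ℕ} {M : Type*} {r : Fin N → M → ℝ}

lemma J_eq_sum_maxOrZero (S : Finset M) :
    J r S = ∑ i, maxOrZero (r i) S := by
  unfold J maxOrZero
  split_ifs <;> simp

lemma J_nonneg (hr : ∀ i j, 0 < r i j) (S : Finset M) : 0 ≤ J r S := by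
  rw [J_eq_sum_maxOrZero]
  exact sum_nonneg fun i _ => maxOrZero_nonneg (fun j => (hr i j).le) S

lemma J_mono (hr : ∀ i j, 0 < r i j) : Monotone (J r) := fun S T hST => by
  simp only [J_eq_sum_maxOrZero]
  exact sum_le_sum fun i _ => maxOrZero_mono (fun j => (hr i j).le) hST

lemma J_le_add_sum_marginal [DecidableEq M] (hr : ∀ i j, 0 < r i j) (S T : Finset M) :
    J r T ≤ J r S + ∑ j ∈ T \ S, (J r (insert j S) - J r S) := by
  simp only [J_eq_sum_maxOrZero]
  exact sum_le_add_sum_marginal _ _ fun i _ =>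
    maxOrZero_le_add_sum_marginal (fun j => (hr i j).le) S T

end Coreset

theorem greedy_guarantee_general {N : ℕ} {M : Type*} [DecidableEq M]
    (r : Fin N → M → ℝ) (hr : ∀ i j, 0 < r i j)
    (K : ℕ) (hK : 0 < K)
    (S : ℕ → Finset M) (j : ℕ → M)
    (hS0 : S 0 = ∅)
    (hstep : ∀ t, 1 ≤ t → t ≤ K →
      j t ∉ S (t - 1) ∧
      S t = insert (j t) (S (t - 1)) ∧
      ∀ j' ∉ S (t - 1), J r (insert j' (S (t - 1))) ≤ J r (insert (j t) (S (t - 1)))) :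
    ∀ T : Finset M, T.card ≤ K → (1 - 1 / Real.exp 1) * J r T ≤ J r (S K) := by
  intro T hT
  have hsucc : ∀ t < K, S (t + 1) = insert (j (t + 1)) (S t) ∧
      ∀ j' ∉ S t, J r (insert j' (S t)) ≤ J r (S (t + 1)) := fun t ht => by
    obtain ⟨-, hSt, hmax⟩ := hstep (t + 1) (by omega) ht
    rw [Nat.add_sub_cancel] at hSt hmax
    exact ⟨hSt, hSt ▸ hmax⟩
  have hgap := greedy_gap_le_pow (J_mono hr) (J_le_add_sum_marginal hr) hK hT
    (fun t ht => (hsucc t ht).1 ▸ subset_insert _ _) (fun t ht => (hsucc t ht).2) K le_rfl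
  have hJ0 : J r (S 0) = 0 := by simp [hS0, J]
  have hpow : (1 - 1 / (K : ℝ)) ^ K ≤ 1 / Real.exp 1 := by
    rw [one_div (Real.exp 1), ← Real.exp_neg]
    exact Real.one_sub_div_pow_le_exp_neg (by exact_mod_cast hK)
  rw [hJ0, sub_zero] at hgap
  nlinarith [mul_le_mul_of_nonneg_right hpow (J_nonneg hr T)]

/-- Greedy `(1 − 1/e)` guarantee applied to the coreset objective: with `S 0 = ∅` and
`S t = S (t-1) ∪ {j t}` for `t = 1, …, K`, where at each step `j t ∉ S (t-1)` maximizes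
`J (S (t-1) ∪ {j})` over all `j ∉ S (t-1)` (and `K ≤ |M|`), we have
`J (S K) ≥ (1 − 1/e) · max { J T : T ⊆ M, |T| ≤ K }`. -/
theorem greedy_guarantee {N : ℕ} {M : Type*} [Fintype M] [DecidableEq M]
    (hN : 0 < N) (r : Fin N → M → ℝ) (hr : ∀ i j, 0 < r i j)
    (K : ℕ) (hK : 0 < K) (hKM : K ≤ Fintype.card M)
    (S : ℕ → Finset M) (j : ℕ → M)
    (hS0 : S 0 = ∅)
    (hstep : ∀ t, 1 ≤ t → t ≤ K →
      j t ∉ S (t - 1) ∧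
      S t = insert (j t) (S (t - 1)) ∧
      ∀ j' ∉ S (t - 1), J r (insert j' (S (t - 1))) ≤ J r (insert (j t) (S (t - 1)))) :
    ∀ T : Finset M, T.card ≤ K → (1 - 1 / Real.exp 1) * J r T ≤ J r (S K) :=
  greedy_guarantee_general r hr K hK S j hS0 hstep
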